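/- Let K be a field of characteristic zero. The Jacobian algebra 𝔸₁ is a prime ring and its centre is exactly K. -/

import Mathlib

/-!
Composing the projection onto constants `1 - x H⁻¹ ∂` with `xⁿ` on the left and `∂ᵏ / k!` on
the right gives every matrix unit `q ↦ q_k xⁿ`, and an algebra of operators on `K[x]` containing
all matrix units is prime. An operator commuting with `x` is multiplication by `f = z 1`; commuting
with `∂` forces `f' = 0`, so `f` is a constant in characteristic zero.
-/
set_option synthInstance.maxHeartbeats 1000000
set_option maxHeartbeats 1000000

open Polynomial

/-- Multiplication by `x` on `K[x]`. -/
noncomputable def xO (K : Type*) [Field K] : Module.End K (Polynomial K) :=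
  LinearMap.mulLeft K Polynomial.X

/-- The derivative `∂` on `K[x]`. -/
noncomputable def dO (K : Type*) [Field K] : Module.End K (Polynomial K) :=
  (Polynomial.derivative : Polynomial K →ₗ[K] Polynomial K)

/-- The Jacobian algebra `𝔸₁`: the subalgebra of `End_K(K[x])` generated by the Weyl
algebra `K⟨x,∂⟩` together with the inverse of `H = ∂x`. -/
noncomputable def A1 (K : Type*) [Field K] : Subalgebra K (Module.End K (Polynomial K)) :=
  Algebra.adjoin K ({xO K, dO K} ∪
    {g | g * (dO K * xO K) = 1 ∧ (dO K * xO K) * g = 1})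

/-- `I` is a two-sided ideal. -/
def IsTwoSided {K A : Type*} [CommSemiring K] [Ring A] [Algebra K A]
    (I : Submodule K A) : Prop :=
  ∀ a ∈ I, ∀ r : A, r * a ∈ I ∧ a * r ∈ I

/-- The carrier of `F ⊆ 𝔸₁`: operators vanishing on `x^m K[x]` for some `m`. -/
def FCar (K : Type*) [Field K] : Set ↥(A1 K) :=
  {a | ∃ m : ℕ, ∀ p : Polynomial K,
    (a : Module.End K (Polynomial K)) (Polynomial.X ^ m * p) = 0}

section MatrixUnit

variable (R : Type*) [CommRing R]

noncomputable def matrixUnit (n k : ℕ) : Module.End R R[X] :=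
  (lcoeff R k).smulRight (X ^ n)

@[simp]
lemma matrixUnit_apply (n k : ℕ) (p : R[X]) : matrixUnit R n k p = p.coeff k • X ^ n := rfl

variable {R}

lemma exists_apply_X_pow_ne_zero {a : Module.End R R[X]} (ha : a ≠ 0) :
    ∃ n : ℕ, a (X ^ n) ≠ 0 := by
  by_contra! h
  exact ha <| (basisMonomials R).ext fun n => by
    simpa [coe_basisMonomials, ← X_pow_eq_monomial] using h n

lemma eq_zero_or_eq_zero_of_forall_mul_matrixUnit_mul [IsDomain R] {a b : Module.End R R[X]}
    (h : ∀ n k, a * matrixUnit R n k * b = 0) : a = 0 ∨ b = 0 := by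
  by_contra! hab
  obtain ⟨n, hn⟩ := exists_apply_X_pow_ne_zero hab.1
  obtain ⟨p, hp⟩ : ∃ p, b p ≠ 0 := by
    by_contra! hb
    exact hab.2 (LinearMap.ext hb)
  obtain ⟨k, hk⟩ : ∃ k, (b p).coeff k ≠ 0 := by
    by_contra! hb
    exact hp (Polynomial.ext hb)
  have := LinearMap.congr_fun (h n k) p
  simp only [Module.End.mul_apply, matrixUnit_apply, map_smul, LinearMap.zero_apply] at this
  exact smul_ne_zero hk hn this

end MatrixUnit

lemma eq_mulLeft_of_forall_apply_X_mul {R : Type*} [CommSemiring R] (T : Module.End R R[X])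
    (hT : ∀ p, T (X * p) = X * T p) : T = LinearMap.mulLeft R (T 1) := by
  refine LinearMap.ext fun p => ?_
  induction p using Polynomial.induction_on with
  | C a =>
    rw [LinearMap.mulLeft_apply, mul_comm, ← smul_eq_C_mul, ← map_smul, smul_eq_C_mul, mul_one]
  | add p q hp hq => simp only [map_add, hp, hq]
  | monomial n a ih =>
    rw [pow_succ', mul_left_comm, hT, ih]
    simp only [LinearMap.mulLeft_apply]
    ring

section Jacobian

variable (K : Type*) [Field K]

@[simp]
lemma xO_apply (p : K[X]) : xO K p = X * p := rfl

@[simp]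
lemma dO_apply (p : K[X]) : dO K p = derivative p := rfl

lemma xO_pow_apply (n : ℕ) (p : K[X]) : (xO K ^ n) p = X ^ n * p := by
  rw [xO, LinearMap.pow_mulLeft, LinearMap.mulLeft_apply]

lemma dO_pow_apply (n : ℕ) (p : K[X]) : (dO K ^ n) p = derivative^[n] p :=
  Module.End.pow_apply _ _ _

lemma xO_mem_A1 : xO K ∈ A1 K := Algebra.subset_adjoin (Or.inl (Or.inl rfl))

lemma dO_mem_A1 : dO K ∈ A1 K := Algebra.subset_adjoin (Or.inl (Or.inr rfl))

lemma eq_algebraMap_of_commute_xO_of_commute_dO [CharZero K] {T : Module.End K K[X]}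
    (hx : Commute (xO K) T) (hd : Commute (dO K) T) : ∃ c : K, T = algebraMap K _ c := by
  obtain ⟨f, rfl⟩ : ∃ f, T = LinearMap.mulLeft K f :=
    ⟨_, eq_mulLeft_of_forall_apply_X_mul T fun p => (LinearMap.congr_fun hx p).symm⟩
  have hf : derivative f = 0 := by
    simpa [derivative_mul, mul_comm] using LinearMap.congr_fun hd X
  refine ⟨f.coeff 0, LinearMap.ext fun p => ?_⟩
  rw [LinearMap.mulLeft_apply, Module.algebraMap_end_apply, smul_eq_C_mul,
    ← eq_C_of_derivative_eq_zero hf]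

lemma dO_mul_xO_monomial (n : ℕ) :
    (dO K * xO K) (monomial n 1) = ((n : K) + 1) • monomial n 1 := by
  simp [X_mul_monomial, smul_monomial]

noncomputable def invH : Module.End K K[X] :=
  (basisMonomials K).constr K fun n => ((n : K) + 1)⁻¹ • monomial n 1

lemma invH_monomial (n : ℕ) : invH K (monomial n 1) = ((n : K) + 1)⁻¹ • monomial n 1 := by
  have h := (basisMonomials K).constr_basis K (fun n => ((n : K) + 1)⁻¹ • monomial n (1 : K)) n
  rwa [coe_basisMonomials] at h

variable [CharZero K]

lemma invH_mul_dO_mul_xO : invH K * (dO K * xO K) = 1 :=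
  (basisMonomials K).ext fun n => by
    simp only [coe_basisMonomials, Module.End.one_apply]
    rw [Module.End.mul_apply, dO_mul_xO_monomial, map_smul, invH_monomial, smul_smul,
      mul_inv_cancel₀ n.cast_add_one_ne_zero, one_smul]

lemma dO_mul_xO_mul_invH : dO K * xO K * invH K = 1 :=
  (basisMonomials K).ext fun n => by
    simp only [coe_basisMonomials, Module.End.one_apply]
    rw [Module.End.mul_apply, invH_monomial, map_smul, dO_mul_xO_monomial, smul_smul,
      inv_mul_cancel₀ n.cast_add_one_ne_zero, one_smul]

lemma invH_mem_A1 : invH K ∈ A1 K :=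
  Algebra.subset_adjoin (Or.inr ⟨invH_mul_dO_mul_xO K, dO_mul_xO_mul_invH K⟩)

lemma invH_derivative_X_mul (q : K[X]) : invH K (derivative (X * q)) = q :=
  LinearMap.congr_fun (invH_mul_dO_mul_xO K) q

lemma one_sub_xO_mul_invH_mul_dO_apply (q : K[X]) :
    (1 - xO K * invH K * dO K) q = C (q.coeff 0) := by
  calc (1 - xO K * invH K * dO K) q
      = (1 - xO K * invH K * dO K) (X * q.divX + C (q.coeff 0)) := by rw [X_mul_divX_add]
    _ = C (q.coeff 0) := by
      simp only [LinearMap.sub_apply, Module.End.one_apply, Module.End.mul_apply, xO_apply,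
        dO_apply, derivative_add, derivative_C, add_zero, invH_derivative_X_mul,
        add_sub_cancel_left]

lemma matrixUnit_mem_A1 (n k : ℕ) : matrixUnit K n k ∈ A1 K := by
  have h : matrixUnit K n k =
      (k.factorial : K)⁻¹ • (xO K ^ n * (1 - xO K * invH K * dO K) * dO K ^ k) := by
    refine LinearMap.ext fun q => ?_
    rw [LinearMap.smul_apply, Module.End.mul_apply, Module.End.mul_apply,
      one_sub_xO_mul_invH_mul_dO_apply, dO_pow_apply, coeff_iterate_derivative, zero_add,
      Nat.descFactorial_self, nsmul_eq_mul, xO_pow_apply, mul_comm, ← smul_eq_C_mul, smul_smul,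
      inv_mul_cancel_left₀ (Nat.cast_ne_zero.mpr k.factorial_ne_zero), matrixUnit_apply]
  rw [h]
  exact Subalgebra.smul_mem _ (mul_mem (mul_mem (pow_mem (xO_mem_A1 K) n)
    (sub_mem (one_mem _) (mul_mem (mul_mem (xO_mem_A1 K) (invH_mem_A1 K)) (dO_mem_A1 K))))
    (pow_mem (dO_mem_A1 K) k)) _

lemma center_A1_eq_bot : Subalgebra.center K (A1 K) = ⊥ := by
  refine eq_bot_iff.mpr fun z hz => ?_
  rw [Subalgebra.mem_center_iff] at hz
  obtain ⟨c, hc⟩ := eq_algebraMap_of_commute_xO_of_commute_dO K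
    (congrArg Subtype.val (hz ⟨xO K, xO_mem_A1 K⟩))
    (congrArg Subtype.val (hz ⟨dO K, dO_mem_A1 K⟩))
  exact ⟨c, Subtype.ext hc.symm⟩

end Jacobian

/-- The Jacobian algebra `𝔸₁` is a prime ring and its centre is exactly
`K`. -/
theorem stmt4 (K : Type*) [Field K] [CharZero K] :
    (∀ a b : ↥(A1 K), (∀ r : ↥(A1 K), a * r * b = 0) → a = 0 ∨ b = 0) ∧
    Subalgebra.center K ↥(A1 K) = ⊥ := by
  refine ⟨fun a b h => ?_, center_A1_eq_bot K⟩
  have hab : (a : Module.End K K[X]) = 0 ∨ (b : Module.End K K[X]) = 0 :=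
    eq_zero_or_eq_zero_of_forall_mul_matrixUnit_mul fun n k =>
      congrArg Subtype.val (h ⟨matrixUnit K n k, matrixUnit_mem_A1 K n k⟩)
  exact hab.imp Subtype.ext Subtype.ext
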